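/- arXiv:2408.03743 — 2 statements merged into one kernel-verified Lean document; each statement's English description precedes it below -/
import Mathlib

section
/- Let (F,→) be an oriented Fano plane with point set V. For each v ∈ V let T(v) be the set of the three points x with x → v. Then the family { T(v) : v ∈ V } is the block set of a Fano plane F_→ on V, and F_→ is orthogonal to F. -/
/-- A Steiner triple system: every block has 3 points and every pair of
distinct points lies in exactly one block. -/
def IsSteiner {V : Type*} [DecidableEq V] (B : Finset (Finset V)) : Prop :=
  (∀ b ∈ B, b.card = 3) ∧
  ∀ x y : V, x ≠ y → ∃! b : Finset V, b ∈ B ∧ x ∈ b ∧ y ∈ b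

/-- A Fano plane: a Steiner triple system on a 7-point set. -/
def IsFano {V : Type*} [DecidableEq V] [Fintype V] (B : Finset (Finset V)) : Prop :=
  Fintype.card V = 7 ∧ IsSteiner B

/-- Two systems on the same point set are disjoint if they share no block. -/
def DisjointSTS {V : Type*} [DecidableEq V] (B1 B2 : Finset (Finset V)) : Prop :=
  ∀ b : Finset V, ¬ (b ∈ B1 ∧ b ∈ B2)

/-- Orthogonality of two Steiner triple systems: disjoint, and two distinct
pairs lying in blocks of the first system with a common third point never have
the same third point in the second system. -/
def OrthogonalSTS {V : Type*} [DecidableEq V] (B1 B2 : Finset (Finset V)) : Prop :=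
  DisjointSTS B1 B2 ∧
  ∀ x y z u v a b : V, ({x, y} : Finset V) ≠ ({u, v} : Finset V) →
    ({x, y, z} : Finset V) ∈ B1 → ({u, v, z} : Finset V) ∈ B1 →
    ({x, y, a} : Finset V) ∈ B2 → ({u, v, b} : Finset V) ∈ B2 → a ≠ b

/-- An orientation on a Fano plane `B`: an antisymmetric relation that cyclically
orients every block, and such that for every point `x` the three out-neighbors of
`x` on the three blocks through `x` themselves form a block. -/
def IsOrientation {V : Type*} [DecidableEq V] (B : Finset (Finset V)) (r : V → V → Prop) : Prop :=
  (∀ x y : V, r x y → ¬ r y x) ∧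
  (∀ x1 x2 x3 : V, ({x1, x2, x3} : Finset V) ∈ B →
    (r x1 x2 ∧ r x2 x3 ∧ r x3 x1) ∨ (r x1 x3 ∧ r x3 x2 ∧ r x2 x1)) ∧
  (∀ x y1 z1 y2 z2 y3 z3 : V,
    ({x, y1, z1} : Finset V) ∈ B → ({x, y2, z2} : Finset V) ∈ B → ({x, y3, z3} : Finset V) ∈ B →
    ({x, y1, z1} : Finset V) ≠ ({x, y2, z2} : Finset V) →
    ({x, y1, z1} : Finset V) ≠ ({x, y3, z3} : Finset V) →
    ({x, y2, z2} : Finset V) ≠ ({x, y3, z3} : Finset V) →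
    r x y1 → r x y2 → r x y3 → ({y1, y2, y3} : Finset V) ∈ B)

open scoped Classical in
/-- The block family `T(v) = { x | x → v }`, `v ∈ V`, associated with an
orientation `r` (written `F_→` in the paper). -/
noncomputable def orientBlocks {V : Type*} [DecidableEq V] [Fintype V] (r : V → V → Prop) :
    Finset (Finset V) :=
  Finset.univ.image (fun v => Finset.univ.filter (fun x => r x v))

/-!
On a block through `v` the orientation puts exactly one out-neighbour and one in-neighbour of `v`,
and matching them along the blocks through `v` is a bijection between the out- and the
in-neighbourhood of `v`. These two neighbourhoods partition the six points other than `v`, so both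
have three points, and the out-neighbourhood is a block by the defining property of an orientation.
Two blocks of a Fano plane always meet, so two distinct points, whose out-neighbourhoods are
distinct blocks, have exactly one common out-neighbour `v`: they lie in exactly one `T(v)`.
Finally `T(v)` is disjoint from the block of out-neighbours of `v`, so it is not a block.
-/

open Finset

namespace IsSteiner

variable {V : Type*} [DecidableEq V] {B : Finset (Finset V)}

theorem eq_of_mem_of_mem (hB : IsSteiner B) {x y : V} (hxy : x ≠ y) {b c : Finset V}
    (hb : b ∈ B) (hc : c ∈ B) (hxb : x ∈ b) (hyb : y ∈ b) (hxc : x ∈ c) (hyc : y ∈ c) :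
    b = c :=
  (hB.2 x y hxy).unique ⟨hb, hxb, hyb⟩ ⟨hc, hxc, hyc⟩

theorem exists_third (hB : IsSteiner B) {x y : V} (hxy : x ≠ y) :
    ∃ z, ({x, y, z} : Finset V) ∈ B ∧ z ≠ x ∧ z ≠ y := by
  obtain ⟨b, ⟨hb, hx, hy⟩, -⟩ := hB.2 x y hxy
  have hy' : y ∈ b.erase x := mem_erase.2 ⟨hxy.symm, hy⟩
  obtain ⟨z, hz⟩ := card_eq_one.1 (by
    rw [card_erase_of_mem hy', card_erase_of_mem hx, hB.1 b hb] : #((b.erase x).erase y) = 1)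
  have hzb : z ∈ (b.erase x).erase y := hz ▸ mem_singleton_self z
  refine ⟨z, ?_, (mem_erase.1 (mem_erase.1 hzb).2).1, (mem_erase.1 hzb).1⟩
  rwa [← hz, insert_erase hy', insert_erase hx]

end IsSteiner

theorem IsFano.not_disjoint {V : Type*} [DecidableEq V] [Fintype V] {B : Finset (Finset V)}
    (hB : IsFano B) {b c : Finset V} (hb : b ∈ B) (hc : c ∈ B) : ¬ Disjoint b c := by
  intro hbc
  have hS := hB.2
  obtain ⟨a₁, ha₁, a₂, ha₂, ha⟩ := one_lt_card.1 (by rw [hS.1 b hb]; norm_num : 1 < #b)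
  obtain ⟨w, hw⟩ := card_pos.1 (by rw [hS.1 c hc]; norm_num : 0 < #c)
  have third_mem_compl : ∀ a ∈ b, ∃ z ∈ (b ∪ c)ᶜ, ({w, a, z} : Finset V) ∈ B := by
    intro a ha
    have hwa : w ≠ a := fun h => disjoint_left.1 hbc ha (h ▸ hw)
    obtain ⟨z, hz, hzw, hza⟩ := hS.exists_third hwa
    refine ⟨z, ?_, hz⟩
    simp only [mem_compl, mem_union, not_or]
    constructor
    · intro hzb
      have := hS.eq_of_mem_of_mem hza.symm hz hb (by simp) (by simp) ha hzb
      exact disjoint_left.1 hbc (this ▸ by simp) hw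
    · intro hzc
      have := hS.eq_of_mem_of_mem hzw.symm hz hc (by simp) (by simp) hw hzc
      exact disjoint_left.1 hbc ha (this ▸ by simp)
  have hcompl : #(b ∪ c)ᶜ = 1 := by
    rw [card_compl, card_union_of_disjoint hbc, hS.1 b hb, hS.1 c hc, hB.1]
  obtain ⟨z, hz, hb₁⟩ := third_mem_compl a₁ ha₁
  obtain ⟨z₂, hz₂, hb₂⟩ := third_mem_compl a₂ ha₂
  obtain rfl : z = z₂ := card_le_one.1 hcompl.le _ hz _ hz₂
  -- the block through `w` and `z` contains `a₁` and `a₂`, so it is `b`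
  have hwz : w ≠ z := fun h => by simp [← h, hw] at hz
  have h₁₂ := hS.eq_of_mem_of_mem hwz hb₁ hb₂ (by simp) (by simp) (by simp) (by simp)
  have hb' := hS.eq_of_mem_of_mem ha hb₁ hb (by simp) (by rw [h₁₂]; simp) ha₁ ha₂
  exact disjoint_left.1 hbc (hb' ▸ by simp) hw

section Neighbors

variable {V : Type*} [Fintype V]

open scoped Classical in
noncomputable def outNeighbors (r : V → V → Prop) (v : V) : Finset V := univ.filter (r v ·)

open scoped Classical in
noncomputable def inNeighbors (r : V → V → Prop) (v : V) : Finset V := univ.filter (r · v)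

variable {r : V → V → Prop} {v x : V}

@[simp]
theorem mem_outNeighbors : x ∈ outNeighbors r v ↔ r v x := by simp [outNeighbors]

@[simp]
theorem mem_inNeighbors : x ∈ inNeighbors r v ↔ r x v := by simp [inNeighbors]

theorem mem_orientBlocks [DecidableEq V] {b : Finset V} :
    b ∈ orientBlocks r ↔ ∃ v, inNeighbors r v = b := by
  simp [orientBlocks, inNeighbors]

end Neighbors

namespace IsOrientation

variable {V : Type*} [DecidableEq V] {B : Finset (Finset V)} {r : V → V → Prop}

theorem irrefl (hr : IsOrientation B r) (v : V) : ¬ r v v := fun h => hr.1 v v h h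

theorem ne_of_rel (hr : IsOrientation B r) {x y : V} (h : r x y) : x ≠ y := by
  rintro rfl
  exact hr.irrefl x h

theorem total (hB : IsSteiner B) (hr : IsOrientation B r) {x y : V} (hxy : x ≠ y) :
    r x y ∨ r y x := by
  obtain ⟨z, hz, -⟩ := hB.exists_third hxy
  rcases hr.2.1 x y z hz with ⟨h, -⟩ | ⟨-, -, h⟩
  exacts [Or.inl h, Or.inr h]

theorem rel_iff_rel (hr : IsOrientation B r) {v u z : V} (h : ({v, u, z} : Finset V) ∈ B) :
    r v u ↔ r z v := by
  rcases hr.2.1 v u z h with ⟨h₁, -, h₃⟩ | ⟨h₁, -, h₃⟩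
  · exact ⟨fun _ => h₃, fun _ => h₁⟩
  · exact ⟨fun h' => absurd h' (hr.1 u v h₃), fun h' => absurd h' (hr.1 v z h₁)⟩

theorem eq_of_rel_of_mem_left (hr : IsOrientation B r) {v p z x : V}
    (h : ({v, p, z} : Finset V) ∈ B) (hp : r v p) (hx : x ∈ ({v, p, z} : Finset V))
    (hvx : r v x) : x = p := by
  have hzv := (hr.rel_iff_rel h).1 hp
  simp only [mem_insert, mem_singleton] at hx
  rcases hx with rfl | rfl | rfl
  · exact absurd hvx (hr.irrefl x)
  · rfl
  · exact absurd hvx (hr.1 x v hzv)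

theorem eq_of_rel_of_mem_right (hr : IsOrientation B r) {v p z x : V}
    (h : ({v, p, z} : Finset V) ∈ B) (hp : r v p) (hx : x ∈ ({v, p, z} : Finset V))
    (hxv : r x v) : x = z := by
  simp only [mem_insert, mem_singleton] at hx
  rcases hx with rfl | rfl | rfl
  · exact absurd hxv (hr.irrefl x)
  · exact absurd hxv (hr.1 v x hp)
  · rfl

variable [Fintype V]

theorem disjoint_outNeighbors_inNeighbors (hr : IsOrientation B r) (v : V) :
    Disjoint (outNeighbors r v) (inNeighbors r v) :=
  disjoint_left.2 fun x hx hx' => hr.1 v x (mem_outNeighbors.1 hx) (mem_inNeighbors.1 hx')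

theorem outNeighbors_union_inNeighbors (hB : IsSteiner B) (hr : IsOrientation B r) (v : V) :
    outNeighbors r v ∪ inNeighbors r v = univ.erase v := by
  ext x
  simp only [mem_union, mem_outNeighbors, mem_inNeighbors, mem_erase, mem_univ, and_true]
  constructor
  · rintro (h | h)
    exacts [(hr.ne_of_rel h).symm, hr.ne_of_rel h]
  · exact fun hx => hr.total hB hx.symm

theorem card_outNeighbors_le_card_inNeighbors (hB : IsSteiner B) (hr : IsOrientation B r)
    (v : V) : #(outNeighbors r v) ≤ #(inNeighbors r v) := by
  refine card_le_card_of_forall_subsingleton (fun p q => ({v, p, q} : Finset V) ∈ B) ?_ ?_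
  · intro p hp
    rw [mem_outNeighbors] at hp
    obtain ⟨z, hz, -⟩ := hB.exists_third (hr.ne_of_rel hp)
    exact ⟨z, mem_inNeighbors.2 ((hr.rel_iff_rel hz).1 hp), hz⟩
  · intro q hq p₁ ⟨hp₁, h₁⟩ p₂ ⟨hp₂, h₂⟩
    rw [mem_inNeighbors] at hq
    have h := hB.eq_of_mem_of_mem (hr.ne_of_rel hq).symm h₁ h₂ (by simp) (by simp) (by simp)
      (by simp)
    exact (hr.eq_of_rel_of_mem_left h₁ (mem_outNeighbors.1 hp₁) (by rw [h]; simp)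
      (mem_outNeighbors.1 hp₂)).symm

theorem card_inNeighbors_le_card_outNeighbors (hB : IsSteiner B) (hr : IsOrientation B r)
    (v : V) : #(inNeighbors r v) ≤ #(outNeighbors r v) := by
  refine card_le_card_of_forall_subsingleton (fun q p => ({v, p, q} : Finset V) ∈ B) ?_ ?_
  · intro q hq
    rw [mem_inNeighbors] at hq
    obtain ⟨z, hz, -⟩ := hB.exists_third (hr.ne_of_rel hq).symm
    rw [pair_comm q z] at hz
    exact ⟨z, mem_outNeighbors.2 ((hr.rel_iff_rel hz).2 hq), hz⟩
  · intro p hp q₁ ⟨hq₁, h₁⟩ q₂ ⟨hq₂, h₂⟩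
    rw [mem_outNeighbors] at hp
    have h := hB.eq_of_mem_of_mem (hr.ne_of_rel hp) h₁ h₂ (by simp) (by simp) (by simp)
      (by simp)
    exact (hr.eq_of_rel_of_mem_right h₁ hp (by rw [h]; simp) (mem_inNeighbors.1 hq₂)).symm

theorem card_outNeighbors (hB : IsFano B) (hr : IsOrientation B r) (v : V) :
    #(outNeighbors r v) = 3 := by
  have h := card_union_of_disjoint (hr.disjoint_outNeighbors_inNeighbors v)
  rw [hr.outNeighbors_union_inNeighbors hB.2 v, card_erase_of_mem (mem_univ v), card_univ,
    hB.1] at h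
  have := hr.card_outNeighbors_le_card_inNeighbors hB.2 v
  have := hr.card_inNeighbors_le_card_outNeighbors hB.2 v
  omega

theorem card_inNeighbors (hB : IsFano B) (hr : IsOrientation B r) (v : V) :
    #(inNeighbors r v) = 3 := by
  rw [← hr.card_outNeighbors hB v]
  exact le_antisymm (hr.card_inNeighbors_le_card_outNeighbors hB.2 v)
    (hr.card_outNeighbors_le_card_inNeighbors hB.2 v)

theorem outNeighbors_mem (hB : IsFano B) (hr : IsOrientation B r) (v : V) :
    outNeighbors r v ∈ B := by
  obtain ⟨p₁, p₂, p₃, h₁₂, h₁₃, h₂₃, hout⟩ := card_eq_three.1 (hr.card_outNeighbors hB v)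
  have hrp (p : V) (hp : p ∈ ({p₁, p₂, p₃} : Finset V)) : r v p :=
    mem_outNeighbors.1 (hout ▸ hp)
  have hp₁ := hrp p₁ (by simp)
  have hp₂ := hrp p₂ (by simp)
  have hp₃ := hrp p₃ (by simp)
  have block : ∀ p, r v p → ∃ z, ({v, p, z} : Finset V) ∈ B := fun p hp =>
    (hB.2.exists_third (hr.ne_of_rel hp)).imp fun _ h => h.1
  have hne : ∀ p p' z z', ({v, p, z} : Finset V) ∈ B → r v p → r v p' → p ≠ p' →
      ({v, p, z} : Finset V) ≠ {v, p', z'} := fun p p' z z' hb hp hp' hpp' heq =>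
    hpp' (hr.eq_of_rel_of_mem_left hb hp (by rw [heq]; simp) hp').symm
  obtain ⟨z₁, hz₁⟩ := block p₁ hp₁
  obtain ⟨z₂, hz₂⟩ := block p₂ hp₂
  obtain ⟨z₃, hz₃⟩ := block p₃ hp₃
  rw [hout]
  exact hr.2.2 v p₁ z₁ p₂ z₂ p₃ z₃ hz₁ hz₂ hz₃ (hne _ _ _ _ hz₁ hp₁ hp₂ h₁₂)
    (hne _ _ _ _ hz₁ hp₁ hp₃ h₁₃) (hne _ _ _ _ hz₂ hp₂ hp₃ h₂₃) hp₁ hp₂ hp₃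

theorem inNeighbors_not_mem (hB : IsFano B) (hr : IsOrientation B r) (v : V) :
    inNeighbors r v ∉ B := fun h =>
  hB.not_disjoint (hr.outNeighbors_mem hB v) h (hr.disjoint_outNeighbors_inNeighbors v)

theorem outNeighbors_injective (hB : IsSteiner B) (hr : IsOrientation B r) :
    Function.Injective (outNeighbors r) := by
  intro x y h
  by_contra hxy
  rcases hr.total hB hxy with hxy' | hyx
  · exact hr.irrefl y (mem_outNeighbors.1 (h ▸ mem_outNeighbors.2 hxy'))
  · exact hr.irrefl x (mem_outNeighbors.1 (h.symm ▸ mem_outNeighbors.2 hyx))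

theorem existsUnique_rel_rel (hB : IsFano B) (hr : IsOrientation B r) {x y : V} (hxy : x ≠ y) :
    ∃! v, r x v ∧ r y v := by
  have hx := hr.outNeighbors_mem hB x
  have hy := hr.outNeighbors_mem hB y
  obtain ⟨v, hvx, hvy⟩ := not_disjoint_iff.1 (hB.not_disjoint hx hy)
  refine ⟨v, ⟨mem_outNeighbors.1 hvx, mem_outNeighbors.1 hvy⟩, fun w ⟨hxw, hyw⟩ => ?_⟩
  by_contra hwv
  exact hxy (hr.outNeighbors_injective hB.2 (hB.2.eq_of_mem_of_mem hwv hx hy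
    (mem_outNeighbors.2 hxw) hvx (mem_outNeighbors.2 hyw) hvy))

end IsOrientation

/-- For an oriented Fano plane `(B, r)`, the in-neighborhood triples `T(v)` form
a Fano plane orthogonal (i.e. disjoint) to `B`. -/
theorem orientBlocks_fano_orthogonal {V : Type*} [DecidableEq V] [Fintype V]
    (B : Finset (Finset V)) (r : V → V → Prop) (hB : IsFano B) (hr : IsOrientation B r) :
    IsFano (orientBlocks r) ∧ DisjointSTS B (orientBlocks r) := by
  refine ⟨⟨hB.1, ?_, ?_⟩, ?_⟩
  · rintro b hb
    obtain ⟨v, rfl⟩ := mem_orientBlocks.1 hb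
    exact hr.card_inNeighbors hB v
  · intro x y hxy
    obtain ⟨v, hv, huniq⟩ := hr.existsUnique_rel_rel hB hxy
    refine ⟨inNeighbors r v, ⟨mem_orientBlocks.2 ⟨v, rfl⟩, by simpa using hv⟩, ?_⟩
    rintro b ⟨hb, hxb, hyb⟩
    obtain ⟨w, rfl⟩ := mem_orientBlocks.1 hb
    rw [huniq w ⟨mem_inNeighbors.1 hxb, mem_inNeighbors.1 hyb⟩]
  · rintro b ⟨hbB, hb⟩
    obtain ⟨v, rfl⟩ := mem_orientBlocks.1 hb
    exact hr.inNeighbors_not_mem hB v hbB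
end

section
/- The group of permutations σ of Z/7 that are automorphisms of the Fano plane with blocks { {i,i+1,i+3} : i ∈ Z/7 } and satisfy σ(x) → σ(y) iff x → y, where x → y iff y−x ∈ {1,2,4} (mod 7), is isomorphic to the Frobenius group of order 21. -/
/-- A permutation is an automorphism of a block set if it maps blocks to blocks. -/
def IsAutomorphism {V : Type*} [DecidableEq V] (B : Finset (Finset V)) (σ : Equiv.Perm V) : Prop :=
  ∀ b : Finset V, b.image σ ∈ B ↔ b ∈ B

/-- The group of all automorphisms of a block set, as a subgroup of the
permutation group of the points. -/
def autGroup {V : Type*} [DecidableEq V] (B : Finset (Finset V)) : Subgroup (Equiv.Perm V) where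
  carrier := {σ | IsAutomorphism B σ}
  one_mem' := by intro b; simp [Finset.image_id]
  mul_mem' := by
    intro σ τ hσ hτ
    intro b
    have h : Finset.image (⇑(σ * τ)) b = Finset.image ⇑σ (Finset.image ⇑τ b) := by
      rw [Finset.image_image]; rfl
    rw [h, hσ (Finset.image ⇑τ b), hτ b]
  inv_mem' := by
    intro σ hσ
    intro b
    have h : Finset.image ⇑σ (Finset.image ⇑σ⁻¹ b) = b := by
      ext z
      simp
    have h2 := hσ (Finset.image ⇑σ⁻¹ b)
    rw [h] at h2
    exact h2.symm

/-- The group of all permutations preserving a binary relation. -/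
def relAutGroup {V : Type*} (r : V → V → Prop) : Subgroup (Equiv.Perm V) where
  carrier := {σ | ∀ x y : V, r (σ x) (σ y) ↔ r x y}
  one_mem' := by intro x y; rfl
  mul_mem' := by
    intro σ τ hσ hτ x y
    exact (hσ (τ x) (τ y)).trans (hτ x y)
  inv_mem' := by
    intro σ hσ x y
    have := hσ (σ⁻¹ x) (σ⁻¹ y)
    simpa using this.symm

/-- The Fano plane on `ZMod 7` with blocks `{i, i+1, i+3}`. -/
def fanoB1 : Finset (Finset (ZMod 7)) :=
  Finset.univ.image (fun i : ZMod 7 => ({i, i + 1, i + 3} : Finset (ZMod 7)))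

/-- The Fano plane on `ZMod 7` with blocks `{i, i+1, i+5}`. -/
def fanoB2 : Finset (Finset (ZMod 7)) :=
  Finset.univ.image (fun i : ZMod 7 => ({i, i + 1, i + 5} : Finset (ZMod 7)))

/-- The permutation `x ↦ 2x` of `ZMod 7`. -/
def lam2 : Equiv.Perm (ZMod 7) :=
  ⟨fun x => 2 * x, fun x => 4 * x, by decide, by decide⟩

/-- The permutation `x ↦ x + 1` of `ZMod 7`. -/
def tau1 : Equiv.Perm (ZMod 7) :=
  ⟨fun x => x + 1, fun x => x - 1, by decide, by decide⟩

/-- The Frobenius group of order 21, realized as the subgroup of `Perm (ZMod 7)`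
generated by `x ↦ 2x` and `x ↦ x + 1`. -/
def F21 : Subgroup (Equiv.Perm (ZMod 7)) := Subgroup.closure {lam2, tau1}

theorem Subgroup.le_of_pair_stabilizer_trivial {α : Type*} {G H : Subgroup (Equiv.Perm α)}
    (hHG : H ≤ G) (a b : α) (hfix : ∀ g ∈ G, g a = a → g b = b → g = 1)
    (htrans : ∀ g ∈ G, ∃ h ∈ H, h a = g a ∧ h b = g b) : G ≤ H := by
  intro g hg
  obtain ⟨h, hH, ha, hb⟩ := htrans g hg
  have hone : h⁻¹ * g = 1 :=
    hfix _ (G.mul_mem (G.inv_mem (hHG hH)) hg)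
      (Equiv.Perm.inv_eq_iff_eq.mpr ha.symm) (Equiv.Perm.inv_eq_iff_eq.mpr hb.symm)
  rwa [← inv_mul_eq_one.mp hone]

theorem apply_eq_self_of_mem_relAutGroup_of_unique {α : Type*} {r : α → α → Prop}
    {σ : Equiv.Perm α} (hσ : σ ∈ relAutGroup r) {a b z : α} (ha : σ a = a) (hb : σ b = b)
    (haz : r a z) (hbz : r b z) (hunique : ∀ w, r a w → r b w → w = z) : σ z = z :=
  hunique _ (by rw [← ha]; exact (hσ a z).2 haz) (by rw [← hb]; exact (hσ b z).2 hbz)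

abbrev fanoArrow (x y : ZMod 7) : Prop := y - x = 1 ∨ y - x = 2 ∨ y - x = 4

theorem fanoArrow_add_two_iff (x w : ZMod 7) :
    fanoArrow x w ∧ fanoArrow (x + 1) w ↔ w = x + 2 := by
  revert x w; decide

theorem eq_one_of_mem_relAutGroup_fanoArrow {σ : Equiv.Perm (ZMod 7)}
    (hσ : σ ∈ relAutGroup fanoArrow) (h0 : σ 0 = 0) (h1 : σ 1 = 1) : σ = 1 := by
  have hconsec : ∀ n : ℕ, σ n = n ∧ σ (n + 1) = n + 1 := by
    intro n
    induction n with
    | zero => simpa using ⟨h0, h1⟩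
    | succ n ih =>
      obtain ⟨hn, hn1⟩ := ih
      have harrows := (fanoArrow_add_two_iff (n : ZMod 7) (n + 2)).2 rfl
      refine ⟨by exact_mod_cast hn1, ?_⟩
      push_cast
      rw [add_assoc, one_add_one_eq_two]
      exact apply_eq_self_of_mem_relAutGroup_of_unique hσ hn hn1 harrows.1 harrows.2
        fun w hw hw' => (fanoArrow_add_two_iff _ w).1 ⟨hw, hw'⟩
  ext x
  simpa using (hconsec x.val).1

theorem tau1_pow_apply (n : ℕ) (x : ZMod 7) : (tau1 ^ n) x = x + n := by
  induction n generalizing x with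
  | zero => simp
  | succ n ih =>
    rw [pow_succ, Equiv.Perm.mul_apply, ih]
    change x + 1 + n = x + (n + 1 : ℕ)
    push_cast
    ring

theorem lam2_pow_apply (n : ℕ) (x : ZMod 7) : (lam2 ^ n) x = 2 ^ n * x := by
  induction n generalizing x with
  | zero => simp
  | succ n ih =>
    rw [pow_succ, Equiv.Perm.mul_apply, ih]
    change 2 ^ n * (2 * x) = 2 ^ (n + 1) * x
    ring

set_option maxRecDepth 10000 in
theorem F21_le_autGroup_fanoB1 : F21 ≤ autGroup fanoB1 := by
  rw [F21, Subgroup.closure_le, Set.insert_subset_iff, Set.singleton_subset_iff]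
  constructor <;> (intro b; revert b; decide)

theorem F21_le_relAutGroup_fanoArrow : F21 ≤ relAutGroup fanoArrow := by
  rw [F21, Subgroup.closure_le, Set.insert_subset_iff, Set.singleton_subset_iff]
  constructor <;> (intro x y; revert x y; decide)

theorem exists_mem_F21_apply_zero_apply_one {p q : ZMod 7} (hpq : fanoArrow p q) :
    ∃ ρ ∈ F21, ρ 0 = p ∧ ρ 1 = q := by
  obtain ⟨k, hk⟩ : ∃ k : ℕ, q = p + 2 ^ k := by
    rcases hpq with h | h | h
    exacts [⟨0, (eq_add_of_sub_eq' h).trans (by norm_num)⟩,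
      ⟨1, (eq_add_of_sub_eq' h).trans (by norm_num)⟩,
      ⟨2, (eq_add_of_sub_eq' h).trans (by norm_num)⟩]
  refine ⟨tau1 ^ p.val * lam2 ^ k,
    F21.mul_mem (F21.pow_mem (Subgroup.subset_closure (by simp)) _)
      (F21.pow_mem (Subgroup.subset_closure (by simp)) _), ?_, ?_⟩
  all_goals
    simp only [Equiv.Perm.mul_apply, tau1_pow_apply, lam2_pow_apply, ZMod.natCast_zmod_val]
  · ring
  · rw [hk]; ring

theorem relAutGroup_fanoArrow_le_F21 : relAutGroup fanoArrow ≤ F21 :=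
  Subgroup.le_of_pair_stabilizer_trivial
    F21_le_relAutGroup_fanoArrow 0 1 (fun _ hσ => eq_one_of_mem_relAutGroup_fanoArrow hσ)
    fun σ hσ => exists_mem_F21_apply_zero_apply_one ((hσ 0 1).2 (by decide))

/-- The group of automorphisms of the oriented Fano plane (`fanoB1` with the
quadratic-residue orientation) is isomorphic to the Frobenius group of order 21. -/
theorem orientedFano_autGroup_iso_F21 :
    Nonempty ((autGroup fanoB1 ⊓
      relAutGroup (fun x y : ZMod 7 => y - x = 1 ∨ y - x = 2 ∨ y - x = 4) :
        Subgroup (Equiv.Perm (ZMod 7))) ≃* F21) :=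
  ⟨MulEquiv.subgroupCongr <| le_antisymm (inf_le_right.trans relAutGroup_fanoArrow_le_F21)
    (le_inf F21_le_autGroup_fanoB1 F21_le_relAutGroup_fanoArrow)⟩
end
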